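/- arXiv:1709.04780 — 2 statements merged into one kernel-verified Lean document; each statement's English description precedes it below -/
import Mathlib

section
/- Let α = 1 − c(1−p) and p̃ = p/α. Then for all x, y, t ∈ ℤ₊ with x < y: d_t(x, y) ≥ α^t · sup_{j∈ℤ₊} Σ_{k=x}^{y−1} P_k^{(p̃)}(X_t = j). -/
/-!
Walkers started at `k + 1` and at `k` can be coupled so that they stay one apart at each step
with probability `α = p + (1 - p)(1 - c) = 1 - c(1 - p)` (both jump up, or the extra individual
survives the catastrophe); given this, the lower walker jumps up with probability `p̃ = p / α`.
Analytically, Pascal's rule gives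
`P_{k+1}(X_t = ·) - P_k(X_t = ·) = α^t (P^{(p̃)}_k(X_t = · - 1) - P^{(p̃)}_k(X_t = ·))`,
so the tail masses satisfy `P_{k+1}(X_t > j) - P_k(X_t > j) = α^t P^{(p̃)}_k(X_t = j)`.
Summing over `k ∈ [x, y)` identifies `α^t Σ_k P^{(p̃)}_k(X_t = j)` with
`P_y(X_t > j) - P_x(X_t > j) ≤ d_t(x, y)`.
-/

open scoped BigOperators
open Filter

noncomputable section

/-- Probability mass function of a Binomial(n, ε) random variable, evaluated at k. -/
def binomPMF (n : ℕ) (ε : ℝ) (k : ℕ) : ℝ :=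
  if k ≤ n then (n.choose k : ℝ) * ε ^ k * (1 - ε) ^ (n - k) else 0

/-- Transition function `p^{p,c}` of the random walk with binomial catastrophes:
`p^{p,c}(i, i+1) = p` and `p^{p,c}(i, j) = (1-p) C(i,j) (1-c)^j c^(i-j)` for `j ≤ i`. -/
def stepFn (p c : ℝ) (i j : ℕ) : ℝ :=
  (if j = i + 1 then p else 0) + (if j ≤ i then (1 - p) * binomPMF i (1 - c) j else 0)

/-- `law p c x t j = P_x(X_t = j)`, the time-`t` distribution of the chain started at `x`. -/
def law (p c : ℝ) (x : ℕ) : ℕ → ℕ → ℝ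
  | 0, j => if j = x then 1 else 0
  | t + 1, j => ∑' i, law p c x t i * stepFn p c i j

/-- Mass that a probability mass function assigns to a set `A ⊆ ℕ`. -/
def massOf (q : ℕ → ℝ) (A : Set ℕ) : ℝ := ∑' j, A.indicator q j

/-- Total variation distance between two distributions on ℕ (given by their pmfs):
the maximum over subsets `A ⊆ ℕ` of `|Q₁(A) - Q₂(A)|`. -/
def tvDist (q₁ q₂ : ℕ → ℝ) : ℝ := ⨆ A : Set ℕ, |massOf q₁ A - massOf q₂ A|

open Finset

-- `shiftRight f` is the pmf of `X + 1` when `f` is the pmf of `X`.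
def shiftRight (f : ℕ → ℝ) : ℕ → ℝ
  | 0 => 0
  | j + 1 => f j

lemma binomPMF_eq (n : ℕ) (ε : ℝ) (k : ℕ) :
    binomPMF n ε k = n.choose k * ε ^ k * (1 - ε) ^ (n - k) := by
  unfold binomPMF
  split_ifs with h
  · rfl
  · rw [Nat.choose_eq_zero_of_lt (not_le.1 h)]; simp

lemma binomPMF_succ (n : ℕ) (ε : ℝ) (k : ℕ) :
    binomPMF (n + 1) ε k = ε * shiftRight (binomPMF n ε) k + (1 - ε) * binomPMF n ε k := by
  rcases k with _ | k
  · simp only [shiftRight, binomPMF_eq, Nat.choose_zero_right, tsub_zero]; ring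
  simp only [shiftRight, binomPMF_eq, Nat.choose_succ_succ, Nat.succ_sub_succ]
  rcases lt_or_ge k n with hk | hk
  · rw [show n - k = n - (k + 1) + 1 by omega]
    push_cast; ring
  · rw [Nat.choose_eq_zero_of_lt (by omega : n < k + 1)]
    push_cast; ring

lemma stepFn_eq (p c : ℝ) (i j : ℕ) :
    stepFn p c i j = (if j = i + 1 then p else 0) + (1 - p) * binomPMF i (1 - c) j := by
  unfold stepFn
  congr 1
  split_ifs with h
  · rfl
  · simp [binomPMF, h]

lemma law_eq_zero_of_lt {p c : ℝ} {x t j : ℕ} (h : x + t < j) : law p c x t j = 0 := by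
  induction t generalizing j with
  | zero => exact if_neg (by omega)
  | succ t ih =>
    refine (tsum_congr fun i => ?_).trans tsum_zero
    by_cases hi : x + t < i
    · rw [ih hi, zero_mul]
    · rw [stepFn_eq, if_neg (by omega), binomPMF, if_neg (by omega)]; ring

lemma support_law_subset (p c : ℝ) (x t : ℕ) :
    Function.support (law p c x t) ⊆ range (x + t + 1) := fun j hj => by
  by_contra h
  exact hj (law_eq_zero_of_lt (by simpa using h))

lemma law_succ_eq_sum {p c : ℝ} {x t N : ℕ} (hN : x + t < N) (j : ℕ) :
    law p c x (t + 1) j = ∑ i ∈ range N, law p c x t i * stepFn p c i j := by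
  refine tsum_eq_sum' ((Function.support_mul_subset_left _ _).trans ?_)
  exact (support_law_subset p c x t).trans (by simpa using hN)

lemma summable_law (p c : ℝ) (x t : ℕ) : Summable (law p c x t) :=
  summable_of_ne_finset_zero fun _ hj => Function.notMem_support.1
    fun h => hj (support_law_subset p c x t h)

lemma sum_range_succ_shiftRight_sub_mul {M : ℕ → ℝ} {n : ℕ} (hM : M n = 0) (g : ℕ → ℝ) :
    ∑ i ∈ range (n + 1), (shiftRight M i - M i) * g i =
      ∑ i ∈ range n, M i * (g (i + 1) - g i) := by
  simp only [sub_mul, mul_sub, sum_sub_distrib]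
  rw [sum_range_succ', sum_range_succ _ n, hM]
  simp [shiftRight]

lemma sum_Ico_shiftRight_sub (M : ℕ → ℝ) {m n : ℕ} (h : m ≤ n) :
    ∑ i ∈ Ico m n, (shiftRight M i - M i) = shiftRight M m - shiftRight M n := by
  calc ∑ i ∈ Ico m n, (shiftRight M i - M i)
      = ∑ i ∈ Ico m n, (-shiftRight M (i + 1) - -shiftRight M i) :=
        sum_congr rfl fun i _ => by simp only [shiftRight]; ring
    _ = shiftRight M m - shiftRight M n := by
        rw [sum_Ico_sub (fun i => -shiftRight M i) h]; ring

lemma massOf_Ioi_eq_sum_Ico {f : ℕ → ℝ} {N : ℕ} (hf : Function.support f ⊆ range N) (j : ℕ) :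
    massOf f (Set.Ioi j) = ∑ m ∈ Ico (j + 1) N, f m := by
  have hsupp : Function.support ((Set.Ioi j).indicator f) ⊆ Ico (j + 1) N := fun m hm => by
    rw [Set.support_indicator] at hm
    have hjm : j < m := hm.1
    have hmN : m < N := by simpa using hf hm.2
    simp only [coe_Ico, Set.mem_Ico]
    omega
  refine (tsum_eq_sum' hsupp).trans (sum_congr rfl fun m hm => ?_)
  exact Set.indicator_of_mem (show j < m by rw [mem_Ico] at hm; omega) f

lemma abs_massOf_le_tsum_abs {f : ℕ → ℝ} (hf : Summable f) (A : Set ℕ) :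
    |massOf f A| ≤ ∑' m, |f m| := by
  simp only [massOf, ← Real.norm_eq_abs]
  calc ‖∑' m, A.indicator f m‖ ≤ ∑' m, ‖A.indicator f m‖ :=
        norm_tsum_le_tsum_norm (hf.indicator A).norm
    _ ≤ ∑' m, ‖f m‖ :=
      (hf.indicator A).norm.tsum_le_tsum (fun m => norm_indicator_le_norm_self f m) hf.norm

lemma abs_massOf_sub_le_tvDist {f g : ℕ → ℝ} (hf : Summable f) (hg : Summable g) (A : Set ℕ) :
    |massOf f A - massOf g A| ≤ tvDist f g := by
  refine le_ciSup (f := fun B => |massOf f B - massOf g B|) ⟨∑' m, |f m| + ∑' m, |g m|, ?_⟩ A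
  rintro _ ⟨B, rfl⟩
  exact (abs_sub _ _).trans
    (add_le_add (abs_massOf_le_tsum_abs hf B) (abs_massOf_le_tsum_abs hg B))

section Coupling

variable {p c α q : ℝ}

lemma stepFn_succ_sub_stepFn (hq : α * q = p) (hq' : α * (1 - q) = (1 - p) * (1 - c))
    (i j : ℕ) :
    stepFn p c (i + 1) j - stepFn p c i j =
      α * (shiftRight (stepFn q c i) j - stepFn q c i j) := by
  rcases j with _ | j
  · simp only [stepFn_eq, binomPMF_succ, shiftRight, Nat.right_eq_add, Nat.add_eq_zero_iff,
      OfNat.ofNat_ne_zero, and_false, one_ne_zero, if_false, zero_add]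
    linear_combination binomPMF i (1 - c) 0 * hq'
  · simp only [stepFn_eq, binomPMF_succ, shiftRight]
    have hi : (if j + 1 = i + 1 + 1 then p else 0) = α * (if j = i + 1 then q else 0) := by
      simp only [add_left_inj]; split_ifs <;> simp [hq]
    have hi' : (if j + 1 = i + 1 then p else 0) = α * (if j + 1 = i + 1 then q else 0) := by
      split_ifs <;> simp [hq]
    rw [hi, hi']
    linear_combination (binomPMF i (1 - c) (j + 1) - binomPMF i (1 - c) j) * hq'

lemma law_succ_sub_law (hq : α * q = p) (hq' : α * (1 - q) = (1 - p) * (1 - c))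
    (k t j : ℕ) :
    law p c (k + 1) t j - law p c k t j =
      α ^ t * (shiftRight (law q c k t) j - law q c k t j) := by
  induction t generalizing j with
  | zero => rcases j with _ | j <;> simp [law, shiftRight]
  | succ t ih =>
    set M := law q c k t
    have shift_law : shiftRight (law q c k (t + 1)) j =
        ∑ i ∈ range (k + t + 1), M i * shiftRight (stepFn q c i) j := by
      rcases j with _ | j
      · simp [shiftRight]
      · exact law_succ_eq_sum (by omega) j
    calc law p c (k + 1) (t + 1) j - law p c k (t + 1) j
        = ∑ i ∈ range (k + t + 2), (law p c (k + 1) t i - law p c k t i) * stepFn p c i j := by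
          rw [law_succ_eq_sum (N := k + t + 2) (by omega),
            law_succ_eq_sum (N := k + t + 2) (by omega), ← sum_sub_distrib]
          simp_rw [sub_mul]
      _ = α ^ t * ∑ i ∈ range (k + t + 1), M i * (stepFn p c (i + 1) j - stepFn p c i j) := by
          simp_rw [ih, mul_assoc, ← mul_sum]
          rw [sum_range_succ_shiftRight_sub_mul (law_eq_zero_of_lt (by omega))]
      _ = α ^ (t + 1) * (shiftRight (law q c k (t + 1)) j - law q c k (t + 1) j) := by
          simp_rw [stepFn_succ_sub_stepFn hq hq', shift_law,
            law_succ_eq_sum (by omega : k + t < k + t + 1), ← sum_sub_distrib, mul_sum]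
          refine sum_congr rfl fun i _ => ?_
          ring

lemma massOf_Ioi_law_succ_sub (hq : α * q = p) (hq' : α * (1 - q) = (1 - p) * (1 - c))
    (k t j : ℕ) :
    massOf (law p c (k + 1) t) (Set.Ioi j) - massOf (law p c k t) (Set.Ioi j) =
      α ^ t * law q c k t j := by
  have hN {x : ℕ} (hx : x ≤ k + 1) : Function.support (law p c x t) ⊆ range (k + t + j + 2) :=
    (support_law_subset p c x t).trans (range_subset_range.2 (by omega))
  rw [massOf_Ioi_eq_sum_Ico (hN le_rfl), massOf_Ioi_eq_sum_Ico (hN k.le_succ), ← sum_sub_distrib]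
  simp_rw [law_succ_sub_law hq hq', ← mul_sum]
  rw [sum_Ico_shiftRight_sub _ (by omega)]
  simp [shiftRight, law_eq_zero_of_lt (show k + t < k + t + j + 1 by omega)]

lemma massOf_Ioi_law_sub_law (hq : α * q = p) (hq' : α * (1 - q) = (1 - p) * (1 - c))
    {x y : ℕ} (hxy : x ≤ y) (t j : ℕ) :
    massOf (law p c y t) (Set.Ioi j) - massOf (law p c x t) (Set.Ioi j) =
      α ^ t * ∑ k ∈ Ico x y, law q c k t j := by
  rw [mul_sum, ← sum_Ico_sub (fun k => massOf (law p c k t) (Set.Ioi j)) hxy]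
  exact sum_congr rfl fun k _ => massOf_Ioi_law_succ_sub hq hq' k t j

end Coupling

/-- **Theorem 3.3.** Let `α = 1 - c(1-p)` and `p̃ = p/α`. For `x < y`,
`d_t(x, y) ≥ α^t · sup_j Σ_{k=x}^{y-1} P_k^{(p̃)}(X_t = j)`. -/
theorem tv_lower_bound
    (p c : ℝ) (hp : p ∈ Set.Ioo (0 : ℝ) 1) (hc : c ∈ Set.Ioc (0 : ℝ) 1)
    (x y t : ℕ) (hxy : x < y) :
    (1 - c * (1 - p)) ^ t *
        ⨆ j : ℕ, ∑ k ∈ Finset.Ico x y, law (p / (1 - c * (1 - p))) c k t j ≤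
      tvDist (law p c y t) (law p c x t) := by
  obtain ⟨hp0, hp1⟩ := hp
  obtain ⟨hc0, hc1⟩ := hc
  set α := 1 - c * (1 - p)
  have hα : 0 < α := by nlinarith
  have hq : α * (p / α) = p := mul_div_cancel₀ p hα.ne'
  have hq' : α * (1 - p / α) = (1 - p) * (1 - c) := by rw [mul_sub, hq]; ring
  rw [Real.mul_iSup_of_nonneg (pow_nonneg hα.le t)]
  refine ciSup_le fun j => ?_
  rw [← massOf_Ioi_law_sub_law hq hq' hxy.le]
  exact (le_abs_self _).trans
    (abs_massOf_sub_le_tvDist (summable_law p c y t) (summable_law p c x t) _)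
end
end

section
/- Let τ = inf{t ≥ 1 : X_t = 0}. There exist constants a, b > 0 such that P_0(τ > t) ≤ a·e^{−bt} for every t ≥ 0. -/
open scoped BigOperators
open Filter

noncomputable section

/-- `avoid p c x t i = P_x(X_s ≠ 0 for 1 ≤ s ≤ t, X_t = i)` (no constraint at time 0). -/
def avoid (p c : ℝ) (x : ℕ) : ℕ → ℕ → ℝ
  | 0, i => if i = x then 1 else 0
  | t + 1, i => if i = 0 then 0 else ∑' k, avoid p c x t k * stepFn p c k i

/-- `tauPMF p c x t = P_x(τ = t)` where `τ = inf{t ≥ 1 : X_t = 0}`. -/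
def tauPMF (p c : ℝ) (x : ℕ) : ℕ → ℝ
  | 0 => 0
  | t + 1 => ∑' k, avoid p c x t k * stepFn p c k 0


section Aux

variable {p c : ℝ}

lemma binomPMF_nonneg {n k : ℕ} {ε : ℝ} (h0 : 0 ≤ ε) (h1 : ε ≤ 1) :
    0 ≤ binomPMF n ε k := by
  unfold binomPMF
  split
  · have h2 : (0:ℝ) ≤ 1 - ε := by linarith
    positivity
  · exact le_rfl

lemma stepFn_nonneg (hp0 : 0 < p) (hp1 : p < 1) (hc0 : 0 < c) (hc1 : c ≤ 1)
    (i j : ℕ) : 0 ≤ stepFn p c i j := by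
  unfold stepFn
  have hb : 0 ≤ binomPMF i (1 - c) j := binomPMF_nonneg (by linarith) (by linarith)
  have h1p : (0:ℝ) ≤ 1 - p := by linarith
  apply add_nonneg <;> split <;> first
    | exact mul_nonneg h1p hb
    | positivity

lemma stepFn_eq_zero_of_gt {i j : ℕ} (h : i + 1 < j) : stepFn p c i j = 0 := by
  unfold stepFn
  rw [if_neg (by omega), if_neg (by omega), add_zero]

lemma avoid_nonneg (hp0 : 0 < p) (hp1 : p < 1) (hc0 : 0 < c) (hc1 : c ≤ 1) :
    ∀ t i, 0 ≤ avoid p c 0 t i := by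
  intro t
  induction t with
  | zero =>
    intro i
    show (0:ℝ) ≤ if i = 0 then 1 else 0
    split <;> norm_num
  | succ t ih =>
    intro i
    show (0:ℝ) ≤ if i = 0 then 0 else ∑' k, avoid p c 0 t k * stepFn p c k i
    split
    · exact le_rfl
    · exact tsum_nonneg fun k => mul_nonneg (ih k) (stepFn_nonneg hp0 hp1 hc0 hc1 k i)

lemma avoid_eq_zero_of_gt : ∀ t i : ℕ, t < i → avoid p c 0 t i = 0 := by
  intro t
  induction t with
  | zero =>
    intro i hi
    show (if i = 0 then (1:ℝ) else 0) = 0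
    rw [if_neg (by omega)]
  | succ t ih =>
    intro i hi
    show (if i = 0 then (0:ℝ) else ∑' k, avoid p c 0 t k * stepFn p c k i) = 0
    rw [if_neg (by omega)]
    have hz : ∀ k : ℕ, avoid p c 0 t k * stepFn p c k i = 0 := by
      intro k
      rcases le_or_gt k t with h | h
      · rw [stepFn_eq_zero_of_gt (by omega), mul_zero]
      · rw [ih k h, zero_mul]
    calc (∑' k, avoid p c 0 t k * stepFn p c k i) = ∑' _ : ℕ, (0:ℝ) := tsum_congr hz
    _ = 0 := tsum_zero

lemma avoid_succ (t i : ℕ) :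
    avoid p c 0 (t + 1) i =
      if i = 0 then 0
      else ∑ k ∈ Finset.range (t + 1), avoid p c 0 t k * stepFn p c k i := by
  show (if i = 0 then (0:ℝ) else ∑' k, avoid p c 0 t k * stepFn p c k i) = _
  split
  · rfl
  · exact tsum_eq_sum fun k hk => by
      rw [avoid_eq_zero_of_gt t k (by simpa using Finset.mem_range.not.mp hk), zero_mul]

lemma binom_sum (n : ℕ) (ε y : ℝ) :
    ∑ i ∈ Finset.range (n + 1), binomPMF n ε i * y ^ i = (ε * y + (1 - ε)) ^ n := by
  rw [add_pow]
  refine Finset.sum_congr rfl fun i hi => ?_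
  have h : i ≤ n := Nat.lt_succ_iff.mp (Finset.mem_range.mp hi)
  unfold binomPMF
  rw [if_pos h, mul_pow]
  ring

lemma exists_K {z s γ C : ℝ} (hz : 1 < z) (hs1 : 1 ≤ s) (hsz : s < z) (hγ : 0 < γ)
    (hC : 0 ≤ C) : ∃ K : ℕ, ∀ k, K ≤ k → C * s ^ k + 1 ≤ γ * z ^ k := by
  have hs0 : 0 < s := by linarith
  have hzs : 1 < z / s := (one_lt_div hs0).mpr hsz
  obtain ⟨K, hK⟩ := pow_unbounded_of_one_lt ((C + 1) / γ) hzs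
  refine ⟨K, fun k hk => ?_⟩
  have h1 : (C + 1) / γ < (z / s) ^ k :=
    lt_of_lt_of_le hK (pow_le_pow_right₀ hzs.le hk)
  have hsk : (0:ℝ) < s ^ k := pow_pos hs0 k
  have h2 : (C + 1) * s ^ k ≤ γ * z ^ k := by
    rw [div_pow] at h1
    have := (div_lt_div_iff₀ hγ (by positivity)).mp h1
    nlinarith
  have h3 : (1:ℝ) ≤ s ^ k := one_le_pow₀ hs1
  nlinarith

lemma key_bound (hp : p ∈ Set.Ioo (0:ℝ) 1) (hc : c ∈ Set.Ioc (0:ℝ) 1) :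
    ∃ z α ρ : ℝ, 1 ≤ z ∧ 1 ≤ α ∧ 0 < ρ ∧ ρ < 1 ∧
      ∀ k : ℕ, p * z ^ (k + 1) + (1 - p) * (c + (1 - c) * z) ^ k + α
          - (1 + α) * ((1 - p) * c ^ k) ≤ ρ * (z ^ k + α) := by
  obtain ⟨hp0, hp1⟩ := hp
  obtain ⟨hc0, hc1⟩ := hc
  set z : ℝ := (1 + p⁻¹) / 2 with hzdef
  have hpinv : 1 < p⁻¹ := by
    have h := mul_inv_cancel₀ hp0.ne'
    nlinarith
  have hz1 : 1 < z := by rw [hzdef]; linarith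
  have hpz : p * z = (p + 1) / 2 := by
    rw [hzdef]; field_simp
  have hpz1 : p * z < 1 := by rw [hpz]; linarith
  have hpz0 : 0 < p * z := by positivity
  set s : ℝ := c + (1 - c) * z with hsdef
  have hs1 : 1 ≤ s := by rw [hsdef]; nlinarith
  have hsz : s < z := by rw [hsdef]; nlinarith
  set γ : ℝ := (1 - p * z) / 2 with hγdef
  have hγ0 : 0 < γ := by rw [hγdef]; linarith
  obtain ⟨K, hK⟩ := exists_K hz1 hs1 hsz hγ0 (show (0:ℝ) ≤ 1 - p by linarith)
  have hcK : (0:ℝ) < (1 - p) * c ^ K := by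
    have := pow_pos hc0 K
    nlinarith
  set α : ℝ := max 1 (((1 - p) * s ^ K + 1) / ((1 - p) * c ^ K)) with hαdef
  have hα1 : 1 ≤ α := le_max_left _ _
  have hα0 : 0 < α := by linarith
  have hαkey : (1 - p) * s ^ K + 1 ≤ α * ((1 - p) * c ^ K) := by
    have h := le_max_right 1 (((1 - p) * s ^ K + 1) / ((1 - p) * c ^ K))
    rw [← hαdef] at h
    calc (1 - p) * s ^ K + 1
        = (((1 - p) * s ^ K + 1) / ((1 - p) * c ^ K)) * ((1 - p) * c ^ K) := by
          field_simp
      _ ≤ α * ((1 - p) * c ^ K) := mul_le_mul_of_nonneg_right h hcK.le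
  set ρ : ℝ := max ((1 + p * z) / 2) (1 - α⁻¹) with hρdef
  have hρ0 : 0 < ρ := lt_of_lt_of_le (by linarith) (le_max_left _ _)
  have hρ1 : ρ < 1 := by
    rw [hρdef]
    apply max_lt (by linarith)
    have : 0 < α⁻¹ := inv_pos.mpr hα0
    linarith
  have hρpz : (1 + p * z) / 2 ≤ ρ := le_max_left _ _
  have hρα : α - α * ρ ≤ 1 := by
    have h := le_max_right ((1 + p * z) / 2) (1 - α⁻¹)
    rw [← hρdef] at h
    have h2 : α * (1 - α⁻¹) ≤ α * ρ := mul_le_mul_of_nonneg_left h hα0.le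
    have h3 : α * (1 - α⁻¹) = α - 1 := by
      field_simp
    linarith
  have hPZρ : p * z ≤ ρ := by
    have := hρpz; linarith
  have hγρ : γ + p * z ≤ ρ := by
    have := hρpz; rw [hγdef]; linarith
  clear_value z s γ α ρ
  refine ⟨z, α, ρ, hz1.le, hα1, hρ0, hρ1, fun k => ?_⟩
  rw [← hsdef]
  have hz0 : (0:ℝ) ≤ z := by linarith
  have hzk : (0:ℝ) ≤ z ^ k := pow_nonneg hz0 k
  have hrw : ρ * (z ^ k + α) = ρ * z ^ k + ρ * α := by ring
  rw [hrw]
  have h1 : p * z ^ (k + 1) ≤ ρ * z ^ k := by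
    have h := mul_le_mul_of_nonneg_right hPZρ hzk
    calc p * z ^ (k + 1) = p * z * z ^ k := by ring
    _ ≤ ρ * z ^ k := h
  rcases le_or_gt k K with hkK | hkK
  · -- small k
    have h2 : (1 - p) * s ^ k ≤ (1 - p) * s ^ K :=
      mul_le_mul_of_nonneg_left (pow_le_pow_right₀ hs1 hkK) (by linarith)
    have h3 : (1 + α) * ((1 - p) * c ^ K) ≤ (1 + α) * ((1 - p) * c ^ k) := by
      apply mul_le_mul_of_nonneg_left _ (by linarith)
      apply mul_le_mul_of_nonneg_left (pow_le_pow_of_le_one hc0.le hc1 hkK) (by linarith)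
    have h5 : α * ((1 - p) * c ^ K) ≤ (1 + α) * ((1 - p) * c ^ K) := by nlinarith
    linarith
  · -- large k
    have hKk : (1 - p) * s ^ k + 1 ≤ γ * z ^ k := hK k hkK.le
    have hA : γ * z ^ k + p * z ^ (k + 1) ≤ ρ * z ^ k := by
      have h := mul_le_mul_of_nonneg_right hγρ hzk
      have e : (γ + p * z) * z ^ k = γ * z ^ k + p * z ^ (k + 1) := by ring
      linarith
    have hB : (0:ℝ) ≤ (1 + α) * ((1 - p) * c ^ k) :=
      mul_nonneg (by linarith) (mul_nonneg (by linarith) (pow_nonneg hc0.le k))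
    linarith

end Aux

/-- **Lemma 5.1.** The first extinction time `τ = inf{t ≥ 1 : X_t = 0}` has exponential
tails: there exist `a, b > 0` with `P_0(τ > t) ≤ a e^{-bt}` for all `t ≥ 0`. Here
`P_0(τ > t) = Σ_i avoid p c 0 t i`. -/
theorem extinction_time_exponential_tail
    (p c : ℝ) (hp : p ∈ Set.Ioo (0 : ℝ) 1) (hc : c ∈ Set.Ioc (0 : ℝ) 1) :
    ∃ a > (0 : ℝ), ∃ b > (0 : ℝ), ∀ t : ℕ,
      (∑' i, avoid p c 0 t i) ≤ a * Real.exp (-b * t) := by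

  obtain ⟨z, α, ρ, hz1, hα1, hρ0, hρ1, hkey⟩ := key_bound hp hc
  obtain ⟨hp0, hp1⟩ := hp
  obtain ⟨hc0, hc1⟩ := hc
  have hz0 : (0:ℝ) ≤ z := by linarith
  have hα0 : (0:ℝ) < α := by linarith
  -- main induction on the weighted sum
  have main : ∀ t : ℕ,
      (∑ i ∈ Finset.range (t + 1), avoid p c 0 t i * (z ^ i + α)) ≤ (1 + α) * ρ ^ t := by
    intro t
    induction t with
    | zero =>
      have h0 : avoid p c 0 0 0 = 1 := by
        show (if (0:ℕ) = 0 then (1:ℝ) else 0) = 1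
        rw [if_pos rfl]
      rw [Finset.sum_range_one, h0, pow_zero, pow_zero, one_mul, mul_one]
    | succ t ih =>
      have inner : ∀ k ∈ Finset.range (t + 1),
          (∑ i ∈ Finset.range (t + 2),
            (if i = 0 then 0 else stepFn p c k i * (z ^ i + α))) ≤ ρ * (z ^ k + α) := by
        intro k hk
        have hkt : k ≤ t := Nat.lt_succ_iff.mp (Finset.mem_range.mp hk)
        have e1 : (∑ i ∈ Finset.range (t + 2),
              (if i = 0 then (0:ℝ) else stepFn p c k i * (z ^ i + α)))
            = (∑ i ∈ Finset.range (t + 2), stepFn p c k i * (z ^ i + α))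
              - stepFn p c k 0 * (z ^ 0 + α) := by
          have hterm : ∀ i : ℕ, (if i = 0 then (0:ℝ) else stepFn p c k i * (z ^ i + α))
              = stepFn p c k i * (z ^ i + α)
                - (if i = 0 then stepFn p c k 0 * (z ^ 0 + α) else 0) := by
            intro i
            split_ifs with h
            · subst h; ring
            · ring
          rw [Finset.sum_congr rfl fun i _ => hterm i, Finset.sum_sub_distrib,
            Finset.sum_ite_eq' (Finset.range (t + 2)) 0
              (fun _ => stepFn p c k 0 * (z ^ 0 + α)),
            if_pos (Finset.mem_range.mpr (by omega))]
        have e2 : (∑ i ∈ Finset.range (t + 2), stepFn p c k i * (z ^ i + α))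
            = p * (z ^ (k + 1) + α) + (1 - p) * ((c + (1 - c) * z) ^ k + α) := by
          unfold stepFn
          rw [Finset.sum_congr rfl fun i _ => add_mul _ _ _, Finset.sum_add_distrib]
          have eA : (∑ i ∈ Finset.range (t + 2),
                (if i = k + 1 then p else 0) * (z ^ i + α)) = p * (z ^ (k + 1) + α) := by
            have hterm : ∀ i ∈ Finset.range (t + 2),
                (if i = k + 1 then p else 0) * (z ^ i + α)
                  = (if i = k + 1 then p * (z ^ i + α) else 0) :=
              fun i _ => by split_ifs <;> ring
            rw [Finset.sum_congr rfl hterm, Finset.sum_ite_eq' (Finset.range (t + 2)) (k + 1)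
              (fun i => p * (z ^ i + α)), if_pos (Finset.mem_range.mpr (by omega))]
          have eB : (∑ i ∈ Finset.range (t + 2),
                (if i ≤ k then (1 - p) * binomPMF k (1 - c) i else 0) * (z ^ i + α))
              = (1 - p) * ((c + (1 - c) * z) ^ k + α) := by
            rw [← Finset.sum_subset (Finset.range_subset_range.mpr (by omega : k + 1 ≤ t + 2))
              (fun i _ hi => by
                have hik : ¬ i ≤ k := fun h => hi (Finset.mem_range.mpr (by omega))
                rw [if_neg hik, zero_mul])]
            rw [Finset.sum_congr rfl (fun i hi => by
              rw [if_pos (Nat.lt_succ_iff.mp (Finset.mem_range.mp hi))])]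
            have expand : ∀ i : ℕ, (1 - p) * binomPMF k (1 - c) i * (z ^ i + α)
                = (1 - p) * (binomPMF k (1 - c) i * z ^ i)
                  + (1 - p) * α * (binomPMF k (1 - c) i * 1 ^ i) := by
              intro i; rw [one_pow]; ring
            rw [Finset.sum_congr rfl fun i _ => expand i, Finset.sum_add_distrib,
              ← Finset.mul_sum, ← Finset.mul_sum, binom_sum, binom_sum]
            have hc1' : (1 - c) * 1 + (1 - (1 - c)) = 1 := by ring
            have hcz : (1 - c) * z + (1 - (1 - c)) = c + (1 - c) * z := by ring
            rw [hc1', hcz, one_pow]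
            ring
          rw [eA, eB]
        have e3 : stepFn p c k 0 = (1 - p) * c ^ k := by
          unfold stepFn binomPMF
          rw [if_neg (by omega), if_pos (Nat.zero_le k), if_pos (Nat.zero_le k)]
          simp only [Nat.choose_zero_right, pow_zero, Nat.sub_zero, Nat.cast_one,
            sub_sub_cancel]
          ring
        rw [e1, e2, e3]
        have := hkey k
        have hex : p * (z ^ (k + 1) + α) + (1 - p) * ((c + (1 - c) * z) ^ k + α)
            - (1 - p) * c ^ k * (z ^ 0 + α)
            = p * z ^ (k + 1) + (1 - p) * (c + (1 - c) * z) ^ k + α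
              - (1 + α) * ((1 - p) * c ^ k) := by
          rw [pow_zero]; ring
        linarith [hex ▸ this]
      have step1 : (∑ i ∈ Finset.range (t + 2), avoid p c 0 (t + 1) i * (z ^ i + α))
          = ∑ k ∈ Finset.range (t + 1), avoid p c 0 t k *
              (∑ i ∈ Finset.range (t + 2),
                (if i = 0 then 0 else stepFn p c k i * (z ^ i + α))) := by
        rw [Finset.sum_congr rfl fun i _ => by rw [avoid_succ]]
        rw [show (∑ i ∈ Finset.range (t + 2),
              (if i = 0 then (0:ℝ)
                else ∑ k ∈ Finset.range (t + 1), avoid p c 0 t k * stepFn p c k i)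
                * (z ^ i + α))
            = ∑ i ∈ Finset.range (t + 2), ∑ k ∈ Finset.range (t + 1),
                avoid p c 0 t k * (if i = 0 then 0 else stepFn p c k i * (z ^ i + α)) from
          Finset.sum_congr rfl fun i _ => by
            split_ifs with h
            · simp
            · rw [Finset.sum_mul]
              exact Finset.sum_congr rfl fun k _ => by ring]
        rw [Finset.sum_comm]
        exact Finset.sum_congr rfl fun k _ => by rw [Finset.mul_sum]
      rw [step1]
      have step2 : (∑ k ∈ Finset.range (t + 1), avoid p c 0 t k *
            (∑ i ∈ Finset.range (t + 2),
              (if i = 0 then 0 else stepFn p c k i * (z ^ i + α))))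
          ≤ ∑ k ∈ Finset.range (t + 1), avoid p c 0 t k * (ρ * (z ^ k + α)) :=
        Finset.sum_le_sum fun k hk =>
          mul_le_mul_of_nonneg_left (inner k hk) (avoid_nonneg hp0 hp1 hc0 hc1 t k)
      have step3 : (∑ k ∈ Finset.range (t + 1), avoid p c 0 t k * (ρ * (z ^ k + α)))
          = ρ * ∑ k ∈ Finset.range (t + 1), avoid p c 0 t k * (z ^ k + α) := by
        rw [Finset.mul_sum]
        exact Finset.sum_congr rfl fun k _ => by ring
      have step4 : ρ * (∑ k ∈ Finset.range (t + 1), avoid p c 0 t k * (z ^ k + α))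
          ≤ ρ * ((1 + α) * ρ ^ t) := mul_le_mul_of_nonneg_left ih hρ0.le
      calc (∑ k ∈ Finset.range (t + 1), avoid p c 0 t k *
            (∑ i ∈ Finset.range (t + 2),
              (if i = 0 then 0 else stepFn p c k i * (z ^ i + α))))
          ≤ ρ * ((1 + α) * ρ ^ t) := by rw [← step3] at step4; linarith [step2, step4]
        _ = (1 + α) * ρ ^ (t + 1) := by ring
  refine ⟨1 + α, by linarith, -Real.log ρ, ?_, fun t => ?_⟩
  · have := Real.log_neg hρ0 hρ1
    linarith
  · have hexp : Real.exp (-(-Real.log ρ) * (t : ℝ)) = ρ ^ t := by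
      rw [neg_neg, mul_comm, Real.exp_nat_mul, Real.exp_log hρ0]
    rw [hexp]
    have hsum : (∑' i, avoid p c 0 t i) = ∑ i ∈ Finset.range (t + 1), avoid p c 0 t i :=
      tsum_eq_sum fun i hi =>
        avoid_eq_zero_of_gt t i (by simpa using Finset.mem_range.not.mp hi)
    rw [hsum]
    have hle : (∑ i ∈ Finset.range (t + 1), avoid p c 0 t i)
        ≤ ∑ i ∈ Finset.range (t + 1), avoid p c 0 t i * (z ^ i + α) := by
      apply Finset.sum_le_sum
      intro i _
      have hnn := avoid_nonneg hp0 hp1 hc0 hc1 t i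
      have hw : (1:ℝ) ≤ z ^ i + α := by
        have : (0:ℝ) ≤ z ^ i := pow_nonneg hz0 i
        linarith
      nlinarith
    exact le_trans hle (main t)
end
end
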